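/- Let λ_1,…,λ_n be distinct points of 𝔻 and let q be a Blaschke product of degree at most n−1. If f is in the Schur class and f(λ_j) = q(λ_j) for j = 1,…,n, then f = q on 𝔻. In other words, any n-point Nevanlinna–Pick problem that is solved by a Blaschke product of degree at most n−1 has a unique Schur-class solution. -/

import Mathlib

/-!
Schur's algorithm. If `|q(λ₁)| = 1`, the maximum principle makes `f` and `q` the same unimodular
constant. Otherwise compose both with the disc automorphism taking `q(λ₁)` to `0` and divide by the
Blaschke factor at `λ₁`: by Schwarz's lemma the quotient of `f` is again a Schur function, the
quotient of `q` is a Blaschke product of one degree less, and the two still agree at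
`λ₂, …, λₙ`, so induction on the degree applies. Writing a Blaschke product of degree `d` as
`N / N*` with `N*` the conjugate reflection of `N`, the degree drop is the division of
`N - q(λ₁) N*` by `z - λ₁`.
-/

open Set Metric

/-- `f` agrees on the open unit disc with a Blaschke product of degree at most `k`,
i.e. with `λ ↦ c·∏ (λ − aᵢ)/(1 − conj(aᵢ)λ)` where `|c| = 1` and each `aᵢ ∈ 𝔻`. -/
def IsBlaschkeDegLE (k : ℕ) (f : ℂ → ℂ) : Prop :=
  ∃ (d : ℕ) (c : ℂ) (a : Fin d → ℂ), d ≤ k ∧ ‖c‖ = 1 ∧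
    (∀ i, ‖a i‖ < 1) ∧
    ∀ lam ∈ ball (0:ℂ) 1,
      f lam = c * ∏ i, (lam - a i) / (1 - (starRingEnd ℂ) (a i) * lam)

open ComplexConjugate

noncomputable def blaschkeFactor (a z : ℂ) : ℂ := (z - a) / (1 - conj a * z)

section BlaschkeFactor

variable {a z : ℂ}

lemma one_sub_conj_mul_ne_zero (ha : ‖a‖ < 1) (hz : ‖z‖ ≤ 1) : 1 - conj a * z ≠ 0 := by
  refine sub_ne_zero.2 fun h => ?_
  have : ‖conj a * z‖ < 1 := by
    rw [norm_mul, Complex.norm_conj]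
    nlinarith [norm_nonneg a, norm_nonneg z]
  rw [← h, norm_one] at this
  exact lt_irrefl _ this

lemma normSq_one_sub_conj_mul (a z : ℂ) :
    Complex.normSq (1 - conj a * z) =
      Complex.normSq (z - a) + (1 - Complex.normSq z) * (1 - Complex.normSq a) := by
  simp only [Complex.normSq_apply, Complex.mul_re, Complex.mul_im, Complex.sub_re,
    Complex.sub_im, Complex.one_re, Complex.one_im, Complex.conj_re, Complex.conj_im]
  ring

lemma norm_sub_le_norm_one_sub_conj_mul (ha : ‖a‖ < 1) (hz : ‖z‖ ≤ 1) :
    ‖z - a‖ ≤ ‖1 - conj a * z‖ := by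
  have key := normSq_one_sub_conj_mul a z
  rw [← Complex.sq_norm, ← Complex.sq_norm, ← Complex.sq_norm, ← Complex.sq_norm] at key
  have : 0 ≤ (1 - ‖z‖ ^ 2) * (1 - ‖a‖ ^ 2) := by
    apply mul_nonneg <;> nlinarith [norm_nonneg a, norm_nonneg z]
  exact pow_le_pow_iff_left₀ (norm_nonneg _) (norm_nonneg _) two_ne_zero |>.1 (by linarith)

lemma norm_sub_lt_norm_one_sub_conj_mul (ha : ‖a‖ < 1) (hz : ‖z‖ < 1) :
    ‖z - a‖ < ‖1 - conj a * z‖ := by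
  have key := normSq_one_sub_conj_mul a z
  rw [← Complex.sq_norm, ← Complex.sq_norm, ← Complex.sq_norm, ← Complex.sq_norm] at key
  have : 0 < (1 - ‖z‖ ^ 2) * (1 - ‖a‖ ^ 2) := by
    apply mul_pos <;> nlinarith [norm_nonneg a, norm_nonneg z]
  exact pow_lt_pow_iff_left₀ (norm_nonneg _) (norm_nonneg _) two_ne_zero |>.1 (by linarith)

lemma norm_blaschkeFactor_le_one (ha : ‖a‖ < 1) (hz : ‖z‖ ≤ 1) : ‖blaschkeFactor a z‖ ≤ 1 := by
  rw [blaschkeFactor, norm_div, div_le_one (norm_pos_iff.2 (one_sub_conj_mul_ne_zero ha hz))]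
  exact norm_sub_le_norm_one_sub_conj_mul ha hz

lemma norm_blaschkeFactor_lt_one (ha : ‖a‖ < 1) (hz : ‖z‖ < 1) : ‖blaschkeFactor a z‖ < 1 := by
  rw [blaschkeFactor, norm_div, div_lt_one (norm_pos_iff.2 (one_sub_conj_mul_ne_zero ha hz.le))]
  exact norm_sub_lt_norm_one_sub_conj_mul ha hz

@[simp]
lemma blaschkeFactor_self (a : ℂ) : blaschkeFactor a a = 0 := by
  simp [blaschkeFactor]

lemma blaschkeFactor_ne_zero (ha : ‖a‖ < 1) (hz : ‖z‖ ≤ 1) (hza : z ≠ a) :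
    blaschkeFactor a z ≠ 0 :=
  div_ne_zero (sub_ne_zero.2 hza) (one_sub_conj_mul_ne_zero ha hz)

lemma blaschkeFactor_div {n D : ℂ} (hD : D ≠ 0) :
    blaschkeFactor a (n / D) = (n - a * D) / (D - conj a * n) := by
  rw [blaschkeFactor, ← mul_div_mul_right _ _ hD]
  congr 1 <;> field_simp

lemma blaschkeFactor_neg_blaschkeFactor (ha : ‖a‖ < 1) (hz : ‖z‖ ≤ 1) :
    blaschkeFactor (-a) (blaschkeFactor a z) = z := by
  show blaschkeFactor (-a) ((z - a) / (1 - conj a * z)) = z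
  have hden : 1 - conj a * z - conj (-a) * (z - a) = 1 - conj a * a := by rw [map_neg]; ring
  rw [blaschkeFactor_div (one_sub_conj_mul_ne_zero ha hz), hden,
    div_eq_iff (one_sub_conj_mul_ne_zero ha ha.le)]
  ring

lemma blaschkeFactor_injOn (ha : ‖a‖ < 1) : InjOn (blaschkeFactor a) (closedBall (0:ℂ) 1) :=
  LeftInvOn.injOn (f₁' := blaschkeFactor (-a)) fun _ hz =>
    blaschkeFactor_neg_blaschkeFactor ha (mem_closedBall_zero_iff.1 hz)

lemma DifferentiableOn.blaschkeFactor {f : ℂ → ℂ} {s : Set ℂ} (hf : DifferentiableOn ℂ f s)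
    (ha : ‖a‖ < 1) (hfs : ∀ z ∈ s, ‖f z‖ ≤ 1) :
    DifferentiableOn ℂ (fun z => blaschkeFactor a (f z)) s :=
  (hf.sub_const a).div ((differentiableOn_const 1).sub (hf.const_mul _))
    fun z hz => one_sub_conj_mul_ne_zero ha (hfs z hz)

lemma differentiableOn_blaschkeFactor (ha : ‖a‖ < 1) :
    DifferentiableOn ℂ (blaschkeFactor a) (ball (0:ℂ) 1) :=
  differentiableOn_id.blaschkeFactor ha fun _ hz => (mem_ball_zero_iff.1 hz).le

lemma mapsTo_blaschkeFactor_ball (ha : ‖a‖ < 1) :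
    MapsTo (blaschkeFactor a) (ball (0:ℂ) 1) (ball (0:ℂ) 1) := fun _ hz =>
  mem_ball_zero_iff.2 (norm_blaschkeFactor_lt_one ha (mem_ball_zero_iff.1 hz))

end BlaschkeFactor

def IsSchur (f : ℂ → ℂ) : Prop :=
  DifferentiableOn ℂ f (ball (0:ℂ) 1) ∧ ∀ z ∈ ball (0:ℂ) 1, ‖f z‖ ≤ 1

namespace IsSchur

variable {f g : ℂ → ℂ} {a : ℂ}

lemma eqOn_const_of_norm_eq_one (hf : IsSchur f) (ha : a ∈ ball (0:ℂ) 1) (h1 : ‖f a‖ = 1) :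
    EqOn f (Function.const ℂ (f a)) (ball (0:ℂ) 1) :=
  Complex.eqOn_of_isPreconnected_of_isMaxOn_norm (convex_ball (0:ℂ) 1).isPreconnected
    isOpen_ball hf.1 ha fun z hz => by simpa [h1] using hf.2 z hz

lemma eqOn_of_norm_eq_one (hf : IsSchur f) (hg : IsSchur g) (ha : a ∈ ball (0:ℂ) 1)
    (hfg : f a = g a) (h1 : ‖f a‖ = 1) : EqOn f g (ball (0:ℂ) 1) := by
  intro z hz
  rw [hf.eqOn_const_of_norm_eq_one ha h1 hz,
    hg.eqOn_const_of_norm_eq_one ha (hfg ▸ h1) hz, Function.const_apply, hfg, Function.const_apply]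

lemma blaschkeFactor_comp (hf : IsSchur f) (ha : ‖a‖ < 1) :
    IsSchur fun z => blaschkeFactor a (f z) :=
  ⟨hf.1.blaschkeFactor ha hf.2, fun z hz => norm_blaschkeFactor_le_one ha (hf.2 z hz)⟩

/-- Move `a` to the origin with `blaschkeFactor (-a)`; there Schwarz's lemma bounds the
difference quotient at `0`. -/
lemma exists_eq_blaschkeFactor_mul (hf : IsSchur f) (ha : a ∈ ball (0:ℂ) 1) (hfa : f a = 0) :
    ∃ g, IsSchur g ∧ ∀ z ∈ ball (0:ℂ) 1, f z = blaschkeFactor a z * g z := by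
  rw [mem_ball_zero_iff] at ha
  have ha' : ‖-a‖ < 1 := by rwa [norm_neg]
  set G := f ∘ blaschkeFactor (-a)
  have hG0 : G 0 = 0 := by simp [G, blaschkeFactor, hfa]
  have hGd : DifferentiableOn ℂ G (ball (0:ℂ) 1) :=
    hf.1.comp (differentiableOn_blaschkeFactor ha') (mapsTo_blaschkeFactor_ball ha')
  have hGmaps : MapsTo G (ball (0:ℂ) 1) (closedBall (G 0) 1) := fun u hu => by
    rw [hG0, mem_closedBall_zero_iff]
    exact hf.2 _ (mapsTo_blaschkeFactor_ball ha' hu)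
  refine ⟨dslope G 0 ∘ blaschkeFactor a, ⟨?_, fun z hz => ?_⟩, fun z hz => ?_⟩
  · exact ((Complex.differentiableOn_dslope (ball_mem_nhds 0 one_pos)).2 hGd).comp
      (differentiableOn_blaschkeFactor ha) (mapsTo_blaschkeFactor_ball ha)
  · simpa using
      Complex.norm_dslope_le_div_of_mapsTo_ball hGd hGmaps (mapsTo_blaschkeFactor_ball ha hz)
  · have := sub_smul_dslope G 0 (blaschkeFactor a z)
    rw [hG0, sub_zero, sub_zero, smul_eq_mul] at this
    rw [Function.comp_apply, this]
    exact (congrArg f (blaschkeFactor_neg_blaschkeFactor ha (mem_ball_zero_iff.1 hz).le)).symm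

end IsSchur

open Polynomial

/-- `conjReflect d p` is `p*(z) = zᵈ · conj (p (1 / conj z))`. -/
noncomputable def conjReflect (d : ℕ) (p : ℂ[X]) : ℂ[X] := (p.map (starRingEnd ℂ)).reflect d

section ConjReflect

variable {d : ℕ} {p q : ℂ[X]}

lemma coeff_conjReflect (d : ℕ) (p : ℂ[X]) (i : ℕ) :
    (conjReflect d p).coeff i = conj (p.coeff (revAt d i)) := by
  simp [conjReflect, coeff_reflect, coeff_map]

lemma natDegree_conjReflect_le (hp : p.natDegree ≤ d) : (conjReflect d p).natDegree ≤ d := by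
  refine natDegree_le_iff_coeff_eq_zero.2 fun i hi => ?_
  rw [coeff_conjReflect, revAt_eq_self_of_lt hi,
    coeff_eq_zero_of_natDegree_lt (hp.trans_lt hi), map_zero]

@[simp]
lemma conjReflect_conjReflect (d : ℕ) (p : ℂ[X]) : conjReflect d (conjReflect d p) = p := by
  ext i
  simp [coeff_conjReflect]

lemma conjReflect_sub (d : ℕ) (p q : ℂ[X]) :
    conjReflect d (p - q) = conjReflect d p - conjReflect d q := by
  simp [conjReflect, Polynomial.map_sub, reflect_sub]

lemma conjReflect_C_mul (d : ℕ) (a : ℂ) (p : ℂ[X]) :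
    conjReflect d (C a * p) = C (conj a) * conjReflect d p := by
  simp [conjReflect, Polynomial.map_mul, reflect_C_mul]

lemma conjReflect_C (a : ℂ) : conjReflect 0 (C a) = C (conj a) := by
  simp [conjReflect, reflect_C]

lemma conjReflect_mul {m n : ℕ} (hp : p.natDegree ≤ m) (hq : q.natDegree ≤ n) :
    conjReflect (m + n) (p * q) = conjReflect m p * conjReflect n q := by
  rw [conjReflect, Polynomial.map_mul]
  exact reflect_mul _ _ (natDegree_map_le.trans hp) (natDegree_map_le.trans hq)

lemma conjReflect_X_sub_C (a : ℂ) : conjReflect 1 (X - C a) = 1 - C (conj a) * X := by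
  ext (_ | _ | i)
  · simp [coeff_conjReflect, coeff_X, coeff_C, revAt_le]
  · simp [coeff_conjReflect, coeff_X, coeff_C, coeff_one, revAt_le]
  · simp [coeff_conjReflect, coeff_X, coeff_one, revAt_eq_self_of_lt]

lemma conjReflect_X_sub_C_mul (a : ℂ) (hp : p.natDegree ≤ d) :
    conjReflect (d + 1) ((X - C a) * p) = (1 - C (conj a) * X) * conjReflect d p := by
  rw [add_comm, conjReflect_mul (natDegree_X_sub_C a).le hp, conjReflect_X_sub_C]

lemma conjReflect_prod_X_sub_C : ∀ {d : ℕ} (a : Fin d → ℂ),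
    conjReflect d (∏ i, (X - C (a i))) = ∏ i, (1 - C (conj (a i)) * X)
  | 0, a => by simpa using conjReflect_C 1
  | d + 1, a => by
    rw [Fin.prod_univ_succ, Fin.prod_univ_succ, conjReflect_X_sub_C_mul _
      ((natDegree_prod_le _ _).trans (by simp)), conjReflect_prod_X_sub_C]

lemma norm_eval_conjReflect_of_norm_eq_one (hp : p.natDegree ≤ d) {z : ℂ} (hz : ‖z‖ = 1) :
    ‖(conjReflect d p).eval z‖ = ‖p.eval z‖ := by
  have hz0 : z ≠ 0 := by rintro rfl; simp at hz
  let : Invertible z⁻¹ := invertibleOfNonzero (inv_ne_zero hz0)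
  have h := eval₂_reflect_mul_pow (RingHom.id ℂ) z⁻¹ d (p.map (starRingEnd ℂ))
    (natDegree_map_le.trans hp)
  rw [invOf_eq_inv, inv_inv, Complex.inv_eq_conj hz, eval₂_id, eval₂_id, eval_map,
    eval₂_at_apply] at h
  simpa [conjReflect, hz] using congrArg norm h

lemma norm_eval_le_norm_eval_conjReflect (hp : p.natDegree ≤ d)
    (hp' : ∀ z ∈ closedBall (0:ℂ) 1, (conjReflect d p).eval z ≠ 0) {z : ℂ}
    (hz : z ∈ closedBall (0:ℂ) 1) : ‖p.eval z‖ ≤ ‖(conjReflect d p).eval z‖ := by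
  have hcl := closure_ball (0:ℂ) one_ne_zero
  have hdiff : DiffContOnCl ℂ (fun z => p.eval z / (conjReflect d p).eval z) (ball (0:ℂ) 1) := by
    refine DifferentiableOn.diffContOnCl ?_
    rw [hcl]
    exact p.differentiable.differentiableOn.div
      (conjReflect d p).differentiable.differentiableOn hp'
  have := Complex.norm_le_of_forall_mem_frontier_norm_le isBounded_ball hdiff (C := 1)
    (fun w hw => ?_) (hcl ▸ hz)
  · rwa [norm_div, div_le_one (norm_pos_iff.2 (hp' z hz))] at this
  · rw [frontier_ball 0 one_ne_zero, mem_sphere_zero_iff_norm] at hw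
    rw [norm_div, norm_eval_conjReflect_of_norm_eq_one hp hw]
    exact div_self_le_one _

lemma exists_sub_C_mul_conjReflect_eq_X_sub_C_mul {N : ℂ[X]} {a w : ℂ}
    (hN : N.natDegree ≤ d + 1) (hroot : N.eval a = w * (conjReflect (d + 1) N).eval a) :
    ∃ N₁ : ℂ[X], N₁.natDegree ≤ d ∧ N - C w * conjReflect (d + 1) N = (X - C a) * N₁ ∧
      conjReflect (d + 1) N - C (conj w) * N = (1 - C (conj a) * X) * conjReflect d N₁ := by
  set P := N - C w * conjReflect (d + 1) N
  have hP : P.natDegree ≤ d + 1 := (natDegree_sub_le _ _).trans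
    (max_le hN ((natDegree_C_mul_le _ _).trans (natDegree_conjReflect_le hN)))
  have hPa : P.IsRoot a := by simp [P, IsRoot, hroot]
  have hfac : (X - C a) * (P /ₘ (X - C a)) = P := mul_divByMonic_eq_iff_isRoot.2 hPa
  have hdeg : (P /ₘ (X - C a)).natDegree ≤ d := by
    rw [natDegree_divByMonic _ (monic_X_sub_C a), natDegree_X_sub_C]
    omega
  refine ⟨P /ₘ (X - C a), hdeg, hfac.symm, ?_⟩
  rw [← conjReflect_X_sub_C_mul a hdeg, hfac]
  simp [P, conjReflect_sub, conjReflect_C_mul]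

end ConjReflect

/-- Rational inner functions of degree `d`: `Q = N / N*` on `𝔻`, where `N* = conjReflect d N` has
no zeros in the closed disc; this forces the zeros of `N` into `𝔻`, so these are the Blaschke
products of degree `d`. -/
def IsRationalInner (d : ℕ) (Q : ℂ → ℂ) : Prop :=
  ∃ N : ℂ[X], N.natDegree ≤ d ∧ (∀ z ∈ closedBall (0:ℂ) 1, (conjReflect d N).eval z ≠ 0) ∧
    ∀ z ∈ ball (0:ℂ) 1, Q z = N.eval z / (conjReflect d N).eval z

namespace IsRationalInner

variable {d : ℕ} {Q : ℂ → ℂ}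

lemma isSchur (hQ : IsRationalInner d Q) : IsSchur Q := by
  obtain ⟨N, hN, hD, hQN⟩ := hQ
  refine ⟨?_, fun z hz => ?_⟩
  · exact (N.differentiable.differentiableOn.div
      (conjReflect d N).differentiable.differentiableOn
      fun z hz => hD z (ball_subset_closedBall hz)).congr hQN
  · have hz' := ball_subset_closedBall hz
    rw [hQN z hz, norm_div, div_le_one (norm_pos_iff.2 (hD z hz'))]
    exact norm_eval_le_norm_eval_conjReflect hN hD hz'

lemma norm_eq_one_of_zero (hQ : IsRationalInner 0 Q) {z : ℂ} (hz : z ∈ ball (0:ℂ) 1) :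
    ‖Q z‖ = 1 := by
  obtain ⟨N, hN, hD, hQN⟩ := hQ
  rw [eq_C_of_natDegree_le_zero hN, conjReflect_C] at hD hQN
  have h0 := hD 0 (mem_closedBall_self zero_le_one)
  rw [eval_C] at h0
  rw [hQN z hz, eval_C, eval_C, norm_div, Complex.norm_conj,
    div_self (norm_ne_zero_iff.2 ((_root_.map_ne_zero _).1 h0))]

lemma exists_blaschkeFactor_mul (hQ : IsRationalInner (d + 1) Q) {a : ℂ}
    (ha : a ∈ ball (0:ℂ) 1) (hQa : ‖Q a‖ < 1) :
    ∃ Q₁, IsRationalInner d Q₁ ∧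
      ∀ z ∈ ball (0:ℂ) 1, blaschkeFactor (Q a) (Q z) = blaschkeFactor a z * Q₁ z := by
  obtain ⟨N, hN, hD, hQN⟩ := hQ
  obtain ⟨N₁, hN₁, hnum, hden⟩ := exists_sub_C_mul_conjReflect_eq_X_sub_C_mul (a := a) (w := Q a)
    hN (by rw [hQN a ha, div_mul_cancel₀ _ (hD a (ball_subset_closedBall ha))])
  set w := Q a
  have hden_ne : ∀ z ∈ closedBall (0:ℂ) 1,
      (conjReflect (d + 1) N).eval z - conj w * N.eval z ≠ 0 := by
    intro z hz
    have hlt : ‖conj w * N.eval z‖ < ‖(conjReflect (d + 1) N).eval z‖ := by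
      rw [norm_mul, Complex.norm_conj]
      calc ‖w‖ * ‖N.eval z‖ ≤ ‖w‖ * ‖(conjReflect (d + 1) N).eval z‖ :=
            mul_le_mul_of_nonneg_left (norm_eval_le_norm_eval_conjReflect hN hD hz) (norm_nonneg _)
        _ < ‖(conjReflect (d + 1) N).eval z‖ :=
            mul_lt_of_lt_one_left (norm_pos_iff.2 (hD z hz)) hQa
    exact sub_ne_zero.2 fun h => hlt.ne (by rw [h])
  have hnum_eval z := by simpa using congrArg (eval z) hnum
  have hden_eval z := by simpa using congrArg (eval z) hden
  refine ⟨fun z => N₁.eval z / (conjReflect d N₁).eval z, ⟨N₁, hN₁, fun z hz => ?_, fun z _ => rfl⟩,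
    fun z hz => ?_⟩
  · have := hden_ne z hz
    rw [hden_eval z] at this
    exact right_ne_zero_of_mul this
  · have hDz := hD z (ball_subset_closedBall hz)
    rw [hQN z hz, blaschkeFactor_div hDz, hnum_eval, hden_eval, blaschkeFactor,
      mul_div_mul_comm]

end IsRationalInner

lemma IsBlaschkeDegLE.exists_isRationalInner {k : ℕ} {q : ℂ → ℂ} (hq : IsBlaschkeDegLE k q) :
    ∃ d ≤ k, IsRationalInner d q := by
  obtain ⟨d, c, a, hdk, hc, ha, hqa⟩ := hq
  -- with `c = s²`, `N = s ∏ (X - aᵢ)` has `N / N* = (s / conj s) ∏ … = c ∏ …`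
  obtain ⟨s, rfl⟩ := IsAlgClosed.exists_pow_nat_eq c two_pos
  have hs : ‖s‖ = 1 := by
    rwa [norm_pow, pow_eq_one_iff_of_nonneg (norm_nonneg s) two_ne_zero] at hc
  have hs0 : s ≠ 0 := by
    rintro rfl
    simp at hs
  have hss : s * conj s = 1 := by rw [Complex.mul_conj', hs]; simp
  have hprod : ∀ z ∈ closedBall (0:ℂ) 1, ∏ i, (1 - conj (a i) * z) ≠ 0 := fun z hz =>
    Finset.prod_ne_zero_iff.2 fun i _ =>
      one_sub_conj_mul_ne_zero (ha i) (mem_closedBall_zero_iff.1 hz)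
  have hrefl : conjReflect d (C s * ∏ i, (X - C (a i))) =
      C (conj s) * ∏ i, (1 - C (conj (a i)) * X) := by
    rw [conjReflect_C_mul, conjReflect_prod_X_sub_C]
  refine ⟨d, hdk, C s * ∏ i, (X - C (a i)), ?_, fun z hz => ?_, fun z hz => ?_⟩
  · exact (natDegree_C_mul_le _ _).trans ((natDegree_prod_le _ _).trans (by simp))
  · rw [hrefl]
    simpa [eval_prod] using ⟨hs0, hprod z hz⟩
  · rw [hqa z hz, hrefl, Finset.prod_div_distrib]
    simp only [eval_mul, eval_C, eval_prod, eval_sub, eval_X, eval_one]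
    rw [mul_div_mul_comm]
    congr 1
    rw [eq_div_iff ((_root_.map_ne_zero _).2 hs0)]
    linear_combination s * hss

theorem IsRationalInner.eqOn_of_eqOn_finset {d : ℕ} {Q f : ℂ → ℂ} (hQ : IsRationalInner d Q)
    (hf : IsSchur f) (s : Finset ℂ) (hs : ∀ z ∈ s, z ∈ ball (0:ℂ) 1) (hds : d < s.card)
    (hfQ : EqOn f Q s) : EqOn f Q (ball (0:ℂ) 1) := by
  induction d generalizing Q f s with
  | zero =>
    obtain ⟨a, ha⟩ := Finset.card_pos.1 hds
    exact hf.eqOn_of_norm_eq_one hQ.isSchur (hs a ha) (hfQ ha)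
      ((hfQ ha).symm ▸ hQ.norm_eq_one_of_zero (hs a ha))
  | succ d ih =>
    obtain ⟨a, ha⟩ := Finset.card_pos.1 (by omega : 0 < s.card)
    have haD := hs a ha
    rcases (hQ.isSchur.2 a haD).eq_or_lt with h1 | hlt
    · exact hf.eqOn_of_norm_eq_one hQ.isSchur haD (hfQ ha) ((hfQ ha).symm ▸ h1)
    obtain ⟨Q₁, hQ₁, hQQ₁⟩ := hQ.exists_blaschkeFactor_mul haD hlt
    obtain ⟨g, hg, hfg⟩ := (hf.blaschkeFactor_comp hlt).exists_eq_blaschkeFactor_mul haD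
      (by simp [hfQ ha])
    have hgQ₁ : EqOn g Q₁ (ball (0:ℂ) 1) := by
      refine ih hQ₁ hg (s.erase a) (fun z hz => hs z (Finset.mem_of_mem_erase hz))
        (by rw [Finset.card_erase_of_mem ha]; omega) fun z hz => ?_
      obtain ⟨hza, hzs⟩ := Finset.mem_erase.1 hz
      have hzD := hs z hzs
      refine mul_left_cancel₀ (blaschkeFactor_ne_zero (mem_ball_zero_iff.1 haD)
        (mem_ball_zero_iff.1 hzD).le hza) ?_
      rw [← hfg z hzD, ← hQQ₁ z hzD, hfQ hzs]
    intro z hz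
    refine blaschkeFactor_injOn hlt (mem_closedBall_zero_iff.2 (hf.2 z hz))
      (mem_closedBall_zero_iff.2 (hQ.isSchur.2 z hz)) ?_
    rw [hfg z hz, hQQ₁ z hz, hgQ₁ hz]

/-- An `n`-point Nevanlinna–Pick problem that is solved by a Blaschke
product of degree at most `n − 1` has a unique Schur-class solution: if `f` is in the
Schur class and agrees with such a `q` at `n` distinct points of `𝔻`, then `f = q`
on `𝔻`. -/
theorem blaschke_solution_unique
    {n : ℕ} (hn : 0 < n)
    (lam : Fin n → ℂ) (hlam : ∀ j, lam j ∈ ball (0:ℂ) 1)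
    (hinj : Function.Injective lam)
    (q : ℂ → ℂ) (hq : IsBlaschkeDegLE (n - 1) q)
    (f : ℂ → ℂ) (hf : DifferentiableOn ℂ f (ball (0:ℂ) 1))
    (hf1 : ∀ lam' ∈ ball (0:ℂ) 1, ‖f lam'‖ ≤ 1)
    (hinterp : ∀ j, f (lam j) = q (lam j)) :
    ∀ lam' ∈ ball (0:ℂ) 1, f lam' = q lam' := by
  classical
  obtain ⟨d, hd, hq⟩ := hq.exists_isRationalInner
  have hfq := hq.eqOn_of_eqOn_finset ⟨hf, hf1⟩ (Finset.univ.image lam) (by simpa using hlam)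
    (by rw [Finset.card_image_of_injective _ hinj, Finset.card_univ, Fintype.card_fin]; omega)
    (by simpa [EqOn] using hinterp)
  exact fun z hz => hfq hz
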